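/- Fix integers r, s ≥ 1 and t ≥ 2, and let ρ ∈ Par_{r,s} be a t-core with a_i = a_i(ρ) for 0 ≤ i ≤ t−1. Then the number of partitions λ ∈ Par_{r,s} with core_t(λ) = ρ equals ∏_{i=0}^{t−1} C(n_i, a_i). -/

import Mathlib

/-!
A partition in the `r × s` box is determined by its beta-set, and every `r`-subset of
`{0, …, r + s - 1}` is a beta-set. The justification of `λ` depends only on the residue counts
`a_i(λ)`, and for a `t`-core `ρ` it is `β(ρ)` itself; so `core_t(λ) = ρ` means exactly that `β(λ)`
has the residue counts of `ρ`. Such a set is chosen independently in each residue class `i`,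
as `a_i` of the `n_i` elements of `{0, …, r + s - 1}` in that class.
-/

open Finset

/-- Partitions in the `r × s` rectangle: weakly decreasing `r`-tuples with parts at most `s`. -/
def IsRectPartition (r s : ℕ) (lam : Fin r → ℕ) : Prop :=
  (∀ i j : Fin r, i ≤ j → lam j ≤ lam i) ∧ ∀ i, lam i ≤ s

/-- The beta-set `β(λ) = {λ_i + r − i : 1 ≤ i ≤ r}` (with 0-indexed `i`). -/
def betaSet (r : ℕ) (lam : Fin r → ℕ) : Finset ℕ :=
  Finset.image (fun i : Fin r => lam i + (r - 1 - (i : ℕ))) Finset.univ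

/-- `λ` is a `t`-core: for every `b ∈ β(λ)` with `b ≥ t`, also `b − t ∈ β(λ)`. -/
def IsTCore (r t : ℕ) (lam : Fin r → ℕ) : Prop :=
  ∀ b ∈ betaSet r lam, t ≤ b → b - t ∈ betaSet r lam

/-- `n_i = ⌊(r+s+t−1−i)/t⌋`. -/
def nres (r s t i : ℕ) : ℕ := (r + s + t - 1 - i) / t

/-- `a_i(λ) = #{b ∈ β(λ) : b ≡ i (mod t)}`. -/
def aCount (r t : ℕ) (lam : Fin r → ℕ) (i : ℕ) : ℕ :=
  ((betaSet r lam).filter fun b => b % t = i).card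

/-- The justification `J(λ)`: in each residue class `i` mod `t`, the `a_i(λ)` smallest
nonnegative integers congruent to `i`. -/
def justification (r t : ℕ) (lam : Fin r → ℕ) : Finset ℕ :=
  (Finset.range t).biUnion fun i =>
    (Finset.range (aCount r t lam i)).image fun m => i + m * t

/-- The size of the `t`-core of `λ`: `Σ_{b ∈ J(λ)} b − r(r−1)/2`. -/
def coreSize (r t : ℕ) (lam : Fin r → ℕ) : ℕ :=
  (∑ b ∈ justification r t lam, b) - r * (r - 1) / 2

theorem card_filter_powerset_fiber_card_eq {α β : Type*} [DecidableEq α] [DecidableEq β]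
    {U : Finset α} {T : Finset β} {f : α → β} (hf : Set.MapsTo f U T) (a : β → ℕ) :
    #{B ∈ U.powerset | ∀ i ∈ T, #{x ∈ B | f x = i} = a i} =
      ∏ i ∈ T, (#{x ∈ U | f x = i}).choose (a i) := by
  have filter_biUnion_eq : ∀ p ∈ T.pi fun i => powersetCard (a i) {x ∈ U | f x = i},
      ∀ i (hi : i ∈ T), {x ∈ T.attach.biUnion (fun j => p j.1 j.2) | f x = i} = p i hi := by
    intro p hp i hi
    rw [mem_pi] at hp
    ext x
    simp only [mem_filter, mem_biUnion, mem_attach, true_and, Subtype.exists]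
    constructor
    · rintro ⟨⟨j, hj, hx⟩, rfl⟩
      obtain rfl : j = f x := (mem_filter.mp ((mem_powersetCard.mp (hp j hj)).1 hx)).2.symm
      exact hx
    · intro hx
      exact ⟨⟨i, hi, hx⟩, (mem_filter.mp ((mem_powersetCard.mp (hp i hi)).1 hx)).2⟩
  rw [← prod_congr rfl fun i _ => card_powersetCard _ _, ← card_pi]
  refine card_bij' (fun B _ i _ => {x ∈ B | f x = i})
    (fun p _ => T.attach.biUnion fun j => p j.1 j.2) ?_ ?_ ?_ ?_
  · intro B hB
    simp only [mem_filter, mem_powerset] at hB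
    simp only [mem_pi, mem_powersetCard]
    exact fun i hi => ⟨filter_subset_filter _ hB.1, hB.2 i hi⟩
  · intro p hp
    simp only [mem_filter, mem_powerset]
    refine ⟨fun x hx => ?_, fun i hi => ?_⟩
    · obtain ⟨⟨j, hj⟩, -, hx⟩ := mem_biUnion.mp hx
      exact (mem_filter.mp ((mem_powersetCard.mp ((mem_pi.mp hp) j hj)).1 hx)).1
    · rw [filter_biUnion_eq p hp i hi]
      exact (mem_powersetCard.mp ((mem_pi.mp hp) i hi)).2
  · intro B hB
    simp only [mem_filter, mem_powerset] at hB
    ext x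
    simp only [mem_biUnion, mem_attach, true_and, Subtype.exists, mem_filter]
    exact ⟨fun ⟨_, _, hx, _⟩ => hx, fun hx => ⟨f x, hf (hB.1 hx), hx, rfl⟩⟩
  · intro p hp
    funext i hi
    exact filter_biUnion_eq p hp i hi

theorem StrictMono.add_sub_le_fin {r : ℕ} {e : Fin r → ℕ} (he : StrictMono e) {i j : Fin r}
    (hij : i ≤ j) : e i + (j - i : ℕ) ≤ e j := by
  have hsub : (Icc i j).image e ⊆ Icc (e i) (e j) := by
    intro x hx
    obtain ⟨k, hk, rfl⟩ := mem_image.mp hx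
    exact mem_Icc.mpr ⟨he.monotone (mem_Icc.mp hk).1, he.monotone (mem_Icc.mp hk).2⟩
  have := card_le_card hsub
  rw [card_image_of_injective _ he.injective, Fin.card_Icc, Nat.card_Icc] at this
  have : (i : ℕ) ≤ j := hij
  omega

theorem StrictMono.val_le_fin {r : ℕ} {e : Fin r → ℕ} (he : StrictMono e) (j : Fin r) :
    (j : ℕ) ≤ e j := by
  have := he.add_sub_le_fin (show (⟨0, j.pos⟩ : Fin r) ≤ j from Nat.zero_le _)
  simp only [Nat.sub_zero] at this
  omega

section BetaSet

variable {r s : ℕ} {lam : Fin r → ℕ}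

theorem betaSet_eq_image_rev (lam : Fin r → ℕ) :
    betaSet r lam = univ.image fun j : Fin r => lam j.rev + (j : ℕ) := by
  conv_rhs => rw [← image_univ_of_surjective (Fin.rev_surjective (n := r)), image_image]
  refine image_congr fun j _ => ?_
  simp only [Function.comp_apply, Fin.rev_rev, Fin.val_rev]
  omega

theorem strictMono_add_val_rev (h : Antitone lam) : StrictMono fun j : Fin r => lam j.rev + j :=
  fun _ _ hab => add_lt_add_of_le_of_lt (h (Fin.rev_le_rev.mpr hab.le)) hab

theorem card_betaSet (h : Antitone lam) : #(betaSet r lam) = r := by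
  rw [betaSet_eq_image_rev, card_image_of_injective _ (strictMono_add_val_rev h).injective,
    card_univ, Fintype.card_fin]

theorem orderEmbOfFin_betaSet_apply (h : Antitone lam) (j : Fin r) :
    (betaSet r lam).orderEmbOfFin (card_betaSet h) j = lam j.rev + j := by
  refine (congrFun (orderEmbOfFin_unique (card_betaSet h) (fun j => ?_)
    (strictMono_add_val_rev h)) j).symm
  rw [betaSet_eq_image_rev]
  exact mem_image_of_mem _ (mem_univ j)

theorem betaSet_subset_range (h : ∀ i, lam i ≤ s) : betaSet r lam ⊆ range (r + s) := by
  intro b hb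
  obtain ⟨i, -, rfl⟩ := mem_image.mp hb
  have := h i
  have := i.isLt
  rw [mem_range]
  omega

theorem betaSet_injOn : Set.InjOn (betaSet r) {lam | Antitone lam} := by
  intro lam hlam mu hmu heq
  funext i
  have hl := orderEmbOfFin_betaSet_apply hlam i.rev
  have hm := orderEmbOfFin_betaSet_apply hmu i.rev
  simp only [heq, Fin.rev_rev] at hl hm
  omega

theorem exists_betaSet_eq {B : Finset ℕ} (hB : B ⊆ range (r + s)) (hcard : #B = r) :
    ∃ lam, IsRectPartition r s lam ∧ betaSet r lam = B := by
  set e := B.orderEmbOfFin hcard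
  have hlt : ∀ j, e j < r + s := fun j => mem_range.mp (hB (B.orderEmbOfFin_mem hcard j))
  have hle : ∀ {i j : Fin r}, i ≤ j → e i + (j - i : ℕ) ≤ e j :=
    fun hij => e.strictMono.add_sub_le_fin hij
  refine ⟨fun i => e i.rev - i.rev, ⟨fun i j hij => ?_, fun i => ?_⟩, ?_⟩
  · dsimp only
    have := hle (Fin.rev_le_rev.mpr hij)
    have := e.strictMono.val_le_fin j.rev
    omega
  · dsimp only
    have hr : (i.rev : ℕ) < r := i.rev.isLt
    have h1 : e i.rev + (r - 1 - i.rev) ≤ e ⟨r - 1, by omega⟩ :=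
      hle (show i.rev ≤ ⟨r - 1, by omega⟩ from Nat.le_sub_one_of_lt hr)
    have h2 := hlt ⟨r - 1, by omega⟩
    omega
  · rw [betaSet_eq_image_rev, ← B.image_orderEmbOfFin_univ hcard]
    refine image_congr fun j _ => ?_
    simp only [Fin.rev_rev]
    exact Nat.sub_add_cancel (e.strictMono.val_le_fin j)

theorem betaSet_bijOn :
    Set.BijOn (betaSet r) {lam | IsRectPartition r s lam} ((range (r + s)).powersetCard r) := by
  refine ⟨fun lam h => ?_, betaSet_injOn.mono fun lam h => h.1, fun B hB => ?_⟩
  · exact mem_powersetCard.mpr ⟨betaSet_subset_range h.2, card_betaSet h.1⟩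
  · obtain ⟨hsub, hcard⟩ := mem_powersetCard.mp hB
    exact exists_betaSet_eq hsub hcard

theorem ncard_setOf_isRectPartition_betaSet (P : Finset ℕ → Prop) [DecidablePred P] :
    {lam | IsRectPartition r s lam ∧ P (betaSet r lam)}.ncard =
      #{B ∈ (range (r + s)).powersetCard r | P B} := by
  have hbij : Set.BijOn (betaSet r) {lam | IsRectPartition r s lam} _ := betaSet_bijOn
  calc _ = (betaSet r '' ({lam | IsRectPartition r s lam} ∩ betaSet r ⁻¹' {B | P B})).ncard :=
        ((hbij.injOn.mono Set.inter_subset_left).ncard_image).symm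
    _ = _ := by
        rw [Set.image_inter_preimage, hbij.image_eq, ← Set.ncard_coe_finset, coe_filter]
        rfl

end BetaSet

section Residues

variable {t i n b : ℕ}

theorem mapsTo_mod_range (ht : 0 < t) (s : Set ℕ) : Set.MapsTo (· % t) s (range t) :=
  fun b _ => mem_range.mpr (Nat.mod_lt b ht)

theorem mem_image_add_mul_range (hi : i < t) :
    b ∈ (range n).image (fun m => i + m * t) ↔ b % t = i ∧ b / t < n := by
  have ht : 0 < t := by omega
  constructor
  · intro hb
    obtain ⟨m, hm, rfl⟩ := mem_image.mp hb
    rw [Nat.add_mul_mod_self_right, Nat.mod_eq_of_lt hi, Nat.add_mul_div_right _ _ ht,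
      Nat.div_eq_of_lt hi, zero_add]
    exact ⟨rfl, mem_range.mp hm⟩
  · rintro ⟨rfl, hb⟩
    exact mem_image.mpr ⟨b / t, mem_range.mpr hb, Nat.mod_add_div' b t⟩

theorem card_image_add_mul_range (ht : 0 < t) : #((range n).image fun m => i + m * t) = n := by
  rw [card_image_of_injective _ fun _ _ h => Nat.eq_of_mul_eq_mul_right ht (Nat.add_left_cancel h),
    card_range]

theorem card_filter_range_mod (hi : i < t) (N : ℕ) :
    #{b ∈ range N | b % t = i} = (N + t - 1 - i) / t := by
  have ht : 0 < t := by omega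
  suffices {b ∈ range N | b % t = i} = (range ((N + t - 1 - i) / t)).image fun m => i + m * t by
    rw [this, card_image_add_mul_range ht]
  ext b
  rw [mem_filter, mem_range, mem_image_add_mul_range hi, and_comm]
  refine and_congr_right fun hb => ?_
  rw [← Nat.add_one_le_iff (n := b / t), Nat.le_div_iff_mul_le ht, add_mul, one_mul]
  have := Nat.mod_add_div' b t
  omega

end Residues

section Justification

variable {r t i b : ℕ} (lam mu : Fin r → ℕ)

theorem sum_aCount (ht : 0 < t) : ∑ i ∈ range t, aCount r t lam i = #(betaSet r lam) :=
  (card_eq_sum_card_fiberwise (mapsTo_mod_range ht _)).symm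

theorem mem_justification (ht : 0 < t) :
    b ∈ justification r t lam ↔ b / t < aCount r t lam (b % t) := by
  simp only [justification, mem_biUnion, mem_range]
  constructor
  · rintro ⟨i, hi, hb⟩
    obtain ⟨rfl, hb⟩ := (mem_image_add_mul_range hi).mp hb
    exact hb
  · intro hb
    exact ⟨b % t, Nat.mod_lt b ht, (mem_image_add_mul_range (Nat.mod_lt b ht)).mpr ⟨rfl, hb⟩⟩

theorem card_filter_justification_mod (hi : i < t) :
    #{b ∈ justification r t lam | b % t = i} = aCount r t lam i := by
  have ht : 0 < t := by omega
  suffices {b ∈ justification r t lam | b % t = i} =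
      (range (aCount r t lam i)).image fun m => i + m * t by
    rw [this, card_image_add_mul_range ht]
  ext b
  rw [mem_filter, mem_justification lam ht, mem_image_add_mul_range hi]
  constructor
  · rintro ⟨hb, rfl⟩
    exact ⟨rfl, hb⟩
  · rintro ⟨rfl, hb⟩
    exact ⟨hb, rfl⟩

theorem card_justification (ht : 0 < t) : #(justification r t lam) = #(betaSet r lam) := by
  rw [card_eq_sum_card_fiberwise (mapsTo_mod_range ht _), ← sum_aCount lam ht]
  exact sum_congr rfl fun i hi => card_filter_justification_mod lam (mem_range.mp hi)

theorem justification_eq_justification_iff :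
    justification r t lam = justification r t mu ↔ ∀ i < t, aCount r t lam i = aCount r t mu i := by
  refine ⟨fun h i hi => ?_, fun h => biUnion_congr rfl fun i hi => by rw [h i (mem_range.mp hi)]⟩
  rw [← card_filter_justification_mod lam hi, h, card_filter_justification_mod mu hi]

variable {lam}

theorem IsTCore.sub_mul_mem (h : IsTCore r t lam) (hb : b ∈ betaSet r lam) :
    ∀ k, k * t ≤ b → b - k * t ∈ betaSet r lam
  | 0, _ => by simpa using hb
  | k + 1, hk => by
    rw [add_mul, one_mul] at hk ⊢
    rw [← Nat.sub_sub]
    exact h _ (h.sub_mul_mem hb k (by omega)) (by omega)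

theorem IsTCore.justification_eq (ht : 0 < t) (h : IsTCore r t lam) :
    justification r t lam = betaSet r lam := by
  refine (eq_of_subset_of_card_le (fun b hb => ?_) (card_justification lam ht).le).symm
  rw [mem_justification lam ht]
  have hsub : (range (b / t + 1)).image (fun m => b % t + m * t) ⊆
      {c ∈ betaSet r lam | c % t = b % t} := by
    intro c hc
    obtain ⟨m, hm, rfl⟩ := mem_image.mp hc
    have hmt : m * t ≤ b / t * t := Nat.mul_le_mul_right t (Nat.lt_succ_iff.mp (mem_range.mp hm))
    have hb' := Nat.mod_add_div' b t
    have hmem := h.sub_mul_mem hb (b / t - m) (by rw [Nat.sub_mul]; omega)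
    rw [Nat.sub_mul, show b - (b / t * t - m * t) = b % t + m * t by omega] at hmem
    exact mem_filter.mpr ⟨hmem, by rw [Nat.add_mul_mod_self_right, Nat.mod_mod]⟩
  have := card_le_card hsub
  rwa [card_image_add_mul_range ht, Nat.add_one_le_iff] at this

end Justification

theorem count_fixed_core_general (r s t : ℕ) (ht : 2 ≤ t)
    (ρ : Fin r → ℕ) (hρ : IsRectPartition r s ρ) (hcore : IsTCore r t ρ) :
    {lam : Fin r → ℕ | IsRectPartition r s lam ∧
        justification r t lam = betaSet r ρ}.ncard =
      ∏ i ∈ Finset.range t, (nres r s t i).choose (aCount r t ρ i) := by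
  have ht0 : 0 < t := by omega
  let P (B : Finset ℕ) : Prop := ∀ i ∈ range t, #{b ∈ B | b % t = i} = aCount r t ρ i
  have hP (lam : Fin r → ℕ) : justification r t lam = betaSet r ρ ↔ P (betaSet r lam) := by
    rw [← hcore.justification_eq ht0, justification_eq_justification_iff]
    simp only [P, mem_range, aCount]
  have hcard (B : Finset ℕ) (hB : P B) : #B = r := by
    rw [card_eq_sum_card_fiberwise (mapsTo_mod_range ht0 _), sum_congr rfl hB, sum_aCount ρ ht0,
      card_betaSet hρ.1]
  calc _ = {lam | IsRectPartition r s lam ∧ P (betaSet r lam)}.ncard := by simp_rw [hP]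
    _ = #{B ∈ (range (r + s)).powersetCard r | P B} := ncard_setOf_isRectPartition_betaSet P
    _ = #{B ∈ (range (r + s)).powerset | P B} := by
        rw [powersetCard_eq_filter, filter_filter]
        exact congrArg card (filter_congr fun B _ => and_iff_right_of_imp (hcard B))
    _ = _ := by
        rw [card_filter_powerset_fiber_card_eq (mapsTo_mod_range ht0 _)]
        exact prod_congr rfl fun i hi => by rw [card_filter_range_mod (mem_range.mp hi)]; rfl

/-- For a `t`-core `ρ ∈ Par_{r,s}`, the number of partitions `λ ∈ Par_{r,s}`
with `core_t(λ) = ρ` (i.e. `J(λ) = β(ρ)`) equals `∏_{i=0}^{t−1} C(n_i, a_i)`. -/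
theorem count_fixed_core (r s t : ℕ) (hr : 1 ≤ r) (hs : 1 ≤ s) (ht : 2 ≤ t)
    (ρ : Fin r → ℕ) (hρ : IsRectPartition r s ρ) (hcore : IsTCore r t ρ) :
    {lam : Fin r → ℕ | IsRectPartition r s lam ∧
        justification r t lam = betaSet r ρ}.ncard =
      ∏ i ∈ Finset.range t, (nres r s t i).choose (aCount r t ρ i) :=
  count_fixed_core_general r s t ht ρ hρ hcore
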